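/- For M ≥ 3 jointly distributed discrete random variables, DTC(X1,...,XM) = DTC(X1,...,X_{M-1}) + Σ_{i=1}^{M-1} I(X_i ; X_M | X_{[M-1]\{i}}). -/

import Mathlib

open BigOperators

/-- A probability distribution on a finite sample space. -/
structure FinProb (Ω : Type*) [Fintype Ω] where
  p : Ω → ℝ
  nonneg : ∀ ω, 0 ≤ p ω
  sum_one : ∑ ω, p ω = 1

/-- Probability that the discrete random variable `X` takes the value `s`. -/
noncomputable def probOf {Ω S : Type*} [Fintype Ω] [DecidableEq S]
    (μ : FinProb Ω) (X : Ω → S) (s : S) : ℝ :=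
  ∑ ω, if X ω = s then μ.p ω else 0

/-- Shannon entropy of a discrete random variable. -/
noncomputable def entropy {Ω S : Type*} [Fintype Ω] [Fintype S] [DecidableEq S]
    (μ : FinProb Ω) (X : Ω → S) : ℝ :=
  -∑ s, probOf μ X s * Real.log (probOf μ X s)

/-- Conditional entropy `H(X | Y) = H(X,Y) - H(Y)`. -/
noncomputable def condEntropy {Ω S T : Type*} [Fintype Ω] [Fintype S] [Fintype T]
    [DecidableEq S] [DecidableEq T] (μ : FinProb Ω) (X : Ω → S) (Y : Ω → T) : ℝ :=
  entropy μ (fun ω => (X ω, Y ω)) - entropy μ Y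

/-- Mutual information `I(X;Y) = H(X) + H(Y) - H(X,Y)`. -/
noncomputable def mutualInfo {Ω S T : Type*} [Fintype Ω] [Fintype S] [Fintype T]
    [DecidableEq S] [DecidableEq T] (μ : FinProb Ω) (X : Ω → S) (Y : Ω → T) : ℝ :=
  entropy μ X + entropy μ Y - entropy μ (fun ω => (X ω, Y ω))

/-- Conditional mutual information `I(X;Y|Z) = H(X,Z) + H(Y,Z) - H(X,Y,Z) - H(Z)`. -/
noncomputable def condMutualInfo {Ω S T U : Type*} [Fintype Ω] [Fintype S] [Fintype T]
    [Fintype U] [DecidableEq S] [DecidableEq T] [DecidableEq U]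
    (μ : FinProb Ω) (X : Ω → S) (Y : Ω → T) (Z : Ω → U) : ℝ :=
  entropy μ (fun ω => (X ω, Z ω)) + entropy μ (fun ω => (Y ω, Z ω))
    - entropy μ (fun ω => (X ω, Y ω, Z ω)) - entropy μ Z

/-- The joint of all variables except `X i`. -/
def jointExcept {Ω S ι : Type*} (X : ι → Ω → S) (i : ι) :
    Ω → ({j : ι // j ≠ i} → S) := fun ω j => X j.1 ω

/-- Total correlation `TotCorr(X1,...,XM) = Σ_i H(X_i) - H(X1,...,XM)`. -/
noncomputable def TotCorr {Ω S ι : Type*} [Fintype Ω] [Fintype S] [DecidableEq S]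
    [Fintype ι] [DecidableEq ι] (μ : FinProb Ω) (X : ι → Ω → S) : ℝ :=
  (∑ i, entropy μ (X i)) - entropy μ (fun ω i => X i ω)

/-- Dual total correlation `DualTotCorr(X1,...,XM) = H(X1,...,XM) - Σ_i H(X_i | X_{[M]\{i}})`. -/
noncomputable def DualTotCorr {Ω S ι : Type*} [Fintype Ω] [Fintype S] [DecidableEq S]
    [Fintype ι] [DecidableEq ι] (μ : FinProb Ω) (X : ι → Ω → S) : ℝ :=
  entropy μ (fun ω i => X i ω) - ∑ i, condEntropy μ (X i) (jointExcept X i)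

/-! Injectively relabelling the values of a random variable does not change its entropy, so every
entropy in the identity is a joint entropy `H_A` of a set `A` of the variables. In these terms
`DTC(X_[n]) = Σ_i H_{[n]∖i} - (n - 1) H_{[n]}` and
`I(X_i; X_M | X_{[M-1]∖i}) = H_{[M-1]} + H_{[M]∖i} - H_{[M]} - H_{[M-1]∖i}`,
and the identity becomes a linear relation between these joint entropies. -/

lemma probOf_comp_apply {Ω S T : Type*} [Fintype Ω] [DecidableEq S] [DecidableEq T]
    (μ : FinProb Ω) (X : Ω → S) {e : S → T} (he : Function.Injective e) (s : S) :
    probOf μ (fun ω => e (X ω)) (e s) = probOf μ X s := by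
  simp only [probOf, he.eq_iff]

lemma probOf_eq_zero_of_notMem_range {Ω S T : Type*} [Fintype Ω] [DecidableEq T]
    (μ : FinProb Ω) (X : Ω → S) (e : S → T) {t : T} (ht : t ∉ Set.range e) :
    probOf μ (fun ω => e (X ω)) t = 0 :=
  Finset.sum_eq_zero fun ω _ => if_neg fun h => ht ⟨X ω, h⟩

lemma entropy_comp_of_injective {Ω S T : Type*} [Fintype Ω] [Fintype S] [Fintype T]
    [DecidableEq S] [DecidableEq T] (μ : FinProb Ω) (X : Ω → S) {e : S → T}
    (he : Function.Injective e) :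
    entropy μ (fun ω => e (X ω)) = entropy μ X := by
  unfold entropy
  rw [neg_inj]
  refine (Fintype.sum_of_injective e he _ _ (fun t ht => ?_) fun s => ?_).symm
  · simp [probOf_eq_zero_of_notMem_range μ X e ht]
  · rw [probOf_comp_apply μ X he]

lemma entropy_pair_jointExcept {Ω S ι : Type*} [Fintype Ω] [Fintype S] [DecidableEq S]
    [Fintype ι] [DecidableEq ι] (μ : FinProb Ω) (X : ι → Ω → S) (i : ι) :
    entropy μ (fun ω => (X i ω, jointExcept X i ω)) = entropy μ (fun ω j => X j ω) :=
  entropy_comp_of_injective μ (fun ω j => X j ω) (Equiv.piSplitAt i fun _ => S).injective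

lemma condEntropy_jointExcept {Ω S ι : Type*} [Fintype Ω] [Fintype S] [DecidableEq S]
    [Fintype ι] [DecidableEq ι] (μ : FinProb Ω) (X : ι → Ω → S) (i : ι) :
    condEntropy μ (X i) (jointExcept X i)
      = entropy μ (fun ω j => X j ω) - entropy μ (jointExcept X i) := by
  rw [condEntropy, entropy_pair_jointExcept]

lemma dualTotCorr_eq_sum_entropy_jointExcept {Ω S ι : Type*} [Fintype Ω] [Fintype S]
    [DecidableEq S] [Fintype ι] [DecidableEq ι] (μ : FinProb Ω) (X : ι → Ω → S) :
    DualTotCorr μ X = ∑ i, entropy μ (jointExcept X i)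
      - (Fintype.card ι - 1) * entropy μ (fun ω j => X j ω) := by
  simp only [DualTotCorr, condEntropy_jointExcept, Finset.sum_sub_distrib, Finset.sum_const,
    Finset.card_univ, nsmul_eq_mul]
  ring

section FinSucc

variable {Ω S : Type*} [Fintype Ω] [Fintype S] [DecidableEq S] {N : ℕ} (μ : FinProb Ω)
  (X : Fin (N + 1) → Ω → S)

lemma entropy_jointExcept_last :
    entropy μ (jointExcept X (Fin.last N))
      = entropy μ (fun ω (j : Fin N) => X j.castSucc ω) := by
  refine (entropy_comp_of_injective μ (jointExcept X (Fin.last N))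
    (e := fun w (j : Fin N) => w ⟨j.castSucc, j.castSucc_lt_last.ne⟩) ?_).symm
  intro w w' h
  funext ⟨k, hk⟩
  obtain ⟨j, rfl⟩ | rfl := k.eq_castSucc_or_eq_last
  · exact congrFun h j
  · exact absurd rfl hk

lemma entropy_last_jointExcept_castSucc (i : Fin N) :
    entropy μ (fun ω => (X (Fin.last N) ω, jointExcept (fun j : Fin N => X j.castSucc) i ω))
      = entropy μ (jointExcept X i.castSucc) := by
  refine entropy_comp_of_injective μ (jointExcept X i.castSucc)
    (e := fun w => (w ⟨Fin.last N, i.castSucc_lt_last.ne'⟩,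
      fun j : {j : Fin N // j ≠ i} =>
        w ⟨j.1.castSucc, fun h => j.2 (Fin.castSucc_injective N h)⟩)) ?_
  intro w w' h
  obtain ⟨hlast, hrest⟩ := Prod.ext_iff.mp h
  funext ⟨k, hk⟩
  obtain ⟨j, rfl⟩ | rfl := k.eq_castSucc_or_eq_last
  · exact congrFun hrest ⟨j, fun hj => hk (congrArg Fin.castSucc hj)⟩
  · exact hlast

lemma entropy_castSucc_last_jointExcept (i : Fin N) :
    entropy μ (fun ω => (X i.castSucc ω, X (Fin.last N) ω,
        jointExcept (fun j : Fin N => X j.castSucc) i ω))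
      = entropy μ (fun ω j => X j ω) := by
  refine entropy_comp_of_injective μ (fun ω j => X j ω)
    (e := fun v : Fin (N + 1) → S =>
      (v i.castSucc, v (Fin.last N), fun j : {j : Fin N // j ≠ i} => v j.1.castSucc)) ?_
  intro v v' h
  simp only [Prod.mk.injEq] at h
  obtain ⟨hi, hlast, hrest⟩ := h
  funext k
  obtain ⟨j, rfl⟩ | rfl := k.eq_castSucc_or_eq_last
  · by_cases hj : j = i
    · exact hj ▸ hi
    · exact congrFun hrest ⟨j, hj⟩
  · exact hlast

lemma condMutualInfo_castSucc_last (i : Fin N) :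
    condMutualInfo μ (X i.castSucc) (X (Fin.last N))
        (jointExcept (fun j : Fin N => X j.castSucc) i)
      = entropy μ (fun ω (j : Fin N) => X j.castSucc ω) + entropy μ (jointExcept X i.castSucc)
        - entropy μ (fun ω j => X j ω)
        - entropy μ (jointExcept (fun j : Fin N => X j.castSucc) i) := by
  rw [condMutualInfo, entropy_pair_jointExcept μ (fun j : Fin N => X j.castSucc) i,
    entropy_last_jointExcept_castSucc, entropy_castSucc_last_jointExcept]

theorem dualTotCorr_fin_succ :
    DualTotCorr μ X = DualTotCorr μ (fun i : Fin N => X i.castSucc)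
      + ∑ i : Fin N, condMutualInfo μ (X i.castSucc) (X (Fin.last N))
          (jointExcept (fun j : Fin N => X j.castSucc) i) := by
  rw [dualTotCorr_eq_sum_entropy_jointExcept, dualTotCorr_eq_sum_entropy_jointExcept,
    Fin.sum_univ_castSucc, entropy_jointExcept_last]
  simp only [condMutualInfo_castSucc_last, Finset.sum_add_distrib, Finset.sum_sub_distrib,
    Finset.sum_const, Finset.card_univ, Fintype.card_fin, nsmul_eq_mul]
  push_cast
  ring

end FinSucc

theorem dtc_recursion {Ω S : Type*} [Fintype Ω] [Fintype S] [DecidableEq S]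
    (M : ℕ) (hM : 3 ≤ M) (μ : FinProb Ω) (X : Fin M → Ω → S) :
    DualTotCorr μ X =
      DualTotCorr μ (fun i : Fin (M - 1) => X (Fin.castLE (Nat.sub_le M 1) i))
      + ∑ i : Fin (M - 1),
          condMutualInfo μ (X (Fin.castLE (Nat.sub_le M 1) i))
            (X ⟨M - 1, by omega⟩)
            (jointExcept (fun j : Fin (M - 1) => X (Fin.castLE (Nat.sub_le M 1) j)) i) := by
  obtain ⟨N, rfl⟩ : ∃ N, M = N + 1 := ⟨M - 1, by omega⟩
  exact dualTotCorr_fin_succ μ X
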